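/- Let V be a 4-dimensional symplectic ℂ-vector space and let 𝔭' denote the space of trace-free self-adjoint endomorphisms of V. For B₁, B₂ ∈ 𝔭', one has [B₁,B₂] = 0 if and only if B₁ and B₂ are proportional, i.e. there exist B ∈ 𝔭' and a, b ∈ ℂ with B₁ = aB and B₂ = bB. In other words, {(B₁,B₂) ∈ 𝔭' × 𝔭' : [B₁,B₂] = 0} = {(aB, bB) : a,b ∈ ℂ, B ∈ 𝔭'}. -/

import Mathlib

/-!
In a Darboux basis `e₀, e₁, e₂, e₃` (`ω e₀ e₁ = ω e₂ e₃ = 1`, all other pairings `e_i, e_j` with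
`i < j` zero) the trace-free self-adjoint endomorphisms of a 4-dimensional symplectic space form a
5-dimensional space of matrices with a simple linear parametrization. The entries of the
commutator of two such matrices are linear combinations of the 2 × 2 minors of their coordinate
vectors, from which every minor can be recovered once `2` is invertible. Hence commuting forces
proportional coordinate vectors.
-/

open Module

def J₄ (K : Type*) [Field K] : Matrix (Fin 4) (Fin 4) K :=
  !![0, 1, 0, 0; -1, 0, 0, 0; 0, 0, 0, 1; 0, 0, -1, 0]

namespace LinearMap.BilinForm

variable {K V : Type*} [Field K] [AddCommGroup V] [Module K V] {ω : LinearMap.BilinForm K V}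

theorem exists_apply_eq_one (hω : ω.SeparatingLeft) {x : V} (hx : x ≠ 0) : ∃ y, ω x y = 1 := by
  obtain ⟨y, hy⟩ : ∃ y, ω x y ≠ 0 := by
    by_contra! h
    exact hx (hω x h)
  exact ⟨(ω x y)⁻¹ • y, by rw [map_smul, smul_eq_mul, inv_mul_cancel₀ hy]⟩

def orthogonalProj (ω : LinearMap.BilinForm K V) (e f : V) : V →ₗ[K] V :=
  LinearMap.id + (ω f).smulRight e - (ω e).smulRight f

theorem orthogonalProj_apply (e f v : V) :
    ω.orthogonalProj e f v = v + ω f v • e - ω e v • f := rfl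

variable {e f : V}

theorem apply_orthogonalProj_left (hω : ω.IsAlt) (hef : ω e f = 1) (v : V) :
    ω e (ω.orthogonalProj e f v) = 0 := by
  simp [orthogonalProj_apply, hω.self_eq_zero, hef]

theorem apply_orthogonalProj_right (hω : ω.IsAlt) (hef : ω e f = 1) (v : V) :
    ω f (ω.orthogonalProj e f v) = 0 := by
  simp [orthogonalProj_apply, hω.self_eq_zero, ← LinearMap.IsAlt.neg hω e f, hef]

theorem apply_orthogonalProj_of_orthogonal (hω : ω.IsAlt) {w : V} (hwe : ω e w = 0)
    (hwf : ω f w = 0) (v : V) : ω w (ω.orthogonalProj e f v) = ω w v := by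
  simp [orthogonalProj_apply, ← LinearMap.IsAlt.neg hω e w, ← LinearMap.IsAlt.neg hω f w, hwe, hwf]

theorem exists_ne_zero_orthogonal_pair [FiniteDimensional K V] (h : 2 < finrank K V) (e f : V) :
    ∃ w ≠ 0, ω e w = 0 ∧ ω f w = 0 := by
  let φ : V →ₗ[K] K × K := (ω e).prod (ω f)
  have hker : 0 < finrank K (ker φ) := by
    have := φ.finrank_range_add_finrank_ker
    have := Submodule.finrank_le (range φ)
    simp only [finrank_prod, finrank_self] at this
    omega
  obtain ⟨⟨w, hw⟩, hw0⟩ := Module.finrank_pos_iff_exists_ne_zero.mp hker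
  simp only [mem_ker, φ, prod_apply, Function.prod, Prod.mk_eq_zero] at hw
  exact ⟨w, by simpa using hw0, hw⟩

theorem linearIndependent_of_isUnit_gram {ι : Type*} [Fintype ι] [DecidableEq ι] {v : ι → V}
    (h : IsUnit (Matrix.of fun i j => ω (v i) (v j))) : LinearIndependent K v := by
  rw [Fintype.linearIndependent_iff]
  intro g hg
  have hvec : Matrix.vecMul g (Matrix.of fun i j => ω (v i) (v j)) = 0 := by
    ext j
    simpa [Matrix.vecMul, dotProduct, map_sum] using congrArg (fun z => ω z (v j)) hg
  exact congrFun (Matrix.vecMul_injective_iff_isUnit.mpr h (hvec.trans (Matrix.zero_vecMul _).symm))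

theorem exists_basis_toMatrix₂_eq_J₄ [FiniteDimensional K V] (hω : ω.IsAlt)
    (hsep : ω.SeparatingLeft) (h4 : finrank K V = 4) :
    ∃ b : Basis (Fin 4) K V, LinearMap.toMatrix₂ b b ω = J₄ K := by
  have : Nontrivial V := Module.finrank_pos_iff (R := K).mp (by omega)
  obtain ⟨e₀, he₀⟩ := exists_ne (0 : V)
  obtain ⟨e₁, h₀₁⟩ := exists_apply_eq_one hsep he₀
  obtain ⟨e₂, he₂, h₀₂, h₁₂⟩ := exists_ne_zero_orthogonal_pair (ω := ω) (by omega) e₀ e₁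
  obtain ⟨y, h₂y⟩ := exists_apply_eq_one hsep he₂
  obtain ⟨e₃, h₀₃, h₁₃, h₂₃⟩ : ∃ e₃, ω e₀ e₃ = 0 ∧ ω e₁ e₃ = 0 ∧ ω e₂ e₃ = 1 :=
    ⟨ω.orthogonalProj e₀ e₁ y, apply_orthogonalProj_left hω h₀₁ y,
      apply_orthogonalProj_right hω h₀₁ y,
      (apply_orthogonalProj_of_orthogonal hω h₀₂ h₁₂ y).trans h₂y⟩
  have hskew (x y : V) : ω y x = -ω x y := (LinearMap.IsAlt.neg hω x y).symm
  let v : Fin 4 → V := ![e₀, e₁, e₂, e₃]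
  have hgram : (Matrix.of fun i j => ω (v i) (v j)) = J₄ K := by
    ext i j
    fin_cases i <;> fin_cases j <;>
      simp [v, J₄, hω.self_eq_zero, hskew e₀ e₁, hskew e₀ e₂, hskew e₀ e₃, hskew e₁ e₂,
        hskew e₁ e₃, hskew e₂ e₃, h₀₁, h₀₂, h₀₃, h₁₂, h₁₃, h₂₃]
  have hJ : IsUnit (J₄ K) := IsUnit.of_mul_eq_one (-J₄ K) (by
    ext i j; fin_cases i <;> fin_cases j <;> simp [J₄, Matrix.mul_apply, Fin.sum_univ_four])
  have hv : LinearIndependent K v := linearIndependent_of_isUnit_gram (hgram ▸ hJ)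
  refine ⟨basisOfLinearIndependentOfCardEqFinrank hv (by simp [h4]), ?_⟩
  ext i j
  rw [LinearMap.toMatrix₂_apply, coe_basisOfLinearIndependentOfCardEqFinrank, ← hgram,
    Matrix.of_apply]

end LinearMap.BilinForm

theorem LinearMap.isAdjointPair_iff_toMatrix {R M n : Type*} [CommRing R] [AddCommGroup M]
    [Module R M] [Fintype n] [DecidableEq n] (b : Basis n R M) (ω : M →ₗ[R] M →ₗ[R] R)
    (f g : Module.End R M) :
    IsAdjointPair ω ω f g ↔
      (toMatrix₂ b b ω).IsAdjointPair (toMatrix₂ b b ω) (toMatrix b b f) (toMatrix b b g) := by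
  rw [← isAdjointPair_toLinearMap₂ b b, Matrix.toLinearMap₂_toMatrix₂, Matrix.toLin_toMatrix,
    Matrix.toLin_toMatrix]

theorem Pi.exists_eq_smul_or_eq_zero_of_cross_mul_eq {K ι : Type*} [Field K] {x y : ι → K}
    (h : ∀ i j, x i * y j = x j * y i) : (∃ c : K, y = c • x) ∨ x = 0 := by
  by_cases hx : x = 0
  · exact Or.inr hx
  obtain ⟨i, hi⟩ := Function.ne_iff.mp hx
  refine Or.inl ⟨y i / x i, funext fun j => ?_⟩
  rw [Pi.smul_apply, smul_eq_mul, div_mul_eq_mul_div, eq_div_iff hi]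
  linear_combination h i j

section TraceFreeSelfAdjoint

variable {K : Type*} [Field K]

/-- In a Darboux basis, the space `𝔭'` of trace-free self-adjoint endomorphisms. -/
def traceFreeSelfAdjoint₄ : (Fin 5 → K) →ₗ[K] Matrix (Fin 4) (Fin 4) K where
  toFun x := !![x 0, 0, x 1, x 2; 0, x 0, x 3, x 4; x 4, -x 2, -x 0, 0; -x 3, x 1, 0, -x 0]
  map_add' x y := by ext i j; fin_cases i <;> fin_cases j <;> simp <;> ring
  map_smul' c x := by ext i j; fin_cases i <;> fin_cases j <;> simp

variable [NeZero (2 : K)]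

theorem eq_traceFreeSelfAdjoint₄ {M : Matrix (Fin 4) (Fin 4) K}
    (hM : (J₄ K).IsSelfAdjoint M) (htr : M.trace = 0) :
    M = traceFreeSelfAdjoint₄ ![M 0 0, M 0 2, M 0 3, M 1 2, M 1 3] := by
  rw [Matrix.IsSelfAdjoint, Matrix.IsAdjointPair, ← Matrix.ext_iff] at hM
  simp only [J₄, Matrix.mul_apply, Fin.sum_univ_four, Matrix.transpose_apply,
    Fin.forall_fin_succ, Fin.succ_zero_eq_one, Fin.succ_one_eq_two, Fin.reduceSucc,
    IsEmpty.forall_iff, Matrix.of_apply, Matrix.cons_val', Matrix.cons_val_zero,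
    Matrix.cons_val_one, Matrix.cons_val, Matrix.cons_val_succ, Matrix.cons_val_fin_one] at hM
  simp only [Matrix.trace, Fin.sum_univ_four, Matrix.diag_apply] at htr
  have h2 : (2 : K) ≠ 0 := two_ne_zero
  ext i j
  fin_cases i <;> fin_cases j <;>
    simp only [traceFreeSelfAdjoint₄, LinearMap.coe_mk, AddHom.coe_mk, Fin.zero_eta, Fin.mk_one,
      Fin.reduceFinMk, Matrix.of_apply, Matrix.cons_val', Matrix.cons_val_zero,
      Matrix.cons_val_one, Matrix.cons_val, Matrix.cons_val_fin_one] <;>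
    grind

theorem traceFreeSelfAdjoint₄_cross_mul_eq_of_commute {x y : Fin 5 → K}
    (h : traceFreeSelfAdjoint₄ x * traceFreeSelfAdjoint₄ y =
      traceFreeSelfAdjoint₄ y * traceFreeSelfAdjoint₄ x) (i j : Fin 5) :
    x i * y j = x j * y i := by
  rw [← Matrix.ext_iff] at h
  simp only [traceFreeSelfAdjoint₄, LinearMap.coe_mk, AddHom.coe_mk, Matrix.mul_apply,
    Fin.sum_univ_four, Fin.forall_fin_succ, IsEmpty.forall_iff, Matrix.of_apply,
    Matrix.cons_val', Matrix.cons_val_zero, Matrix.cons_val_one, Matrix.cons_val,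
    Matrix.cons_val_succ, Matrix.cons_val_fin_one] at h
  have h2 : (2 : K) ≠ 0 := two_ne_zero
  fin_cases i <;> fin_cases j <;> simp only [Fin.zero_eta, Fin.mk_one, Fin.reduceFinMk] <;> grind

theorem eq_smul_or_eq_zero_of_commute_of_isSelfAdjoint_J₄ {M N : Matrix (Fin 4) (Fin 4) K}
    (hM : (J₄ K).IsSelfAdjoint M) (hN : (J₄ K).IsSelfAdjoint N)
    (htrM : M.trace = 0) (htrN : N.trace = 0) (hMN : M * N = N * M) :
    (∃ c : K, N = c • M) ∨ M = 0 := by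
  rw [eq_traceFreeSelfAdjoint₄ hM htrM, eq_traceFreeSelfAdjoint₄ hN htrN] at hMN ⊢
  rcases Pi.exists_eq_smul_or_eq_zero_of_cross_mul_eq
    (traceFreeSelfAdjoint₄_cross_mul_eq_of_commute hMN) with ⟨c, hc⟩ | h0
  · exact Or.inl ⟨c, by rw [hc, map_smul]⟩
  · exact Or.inr (by rw [h0, map_zero])

end TraceFreeSelfAdjoint

/-- Let `V` be a 4-dimensional symplectic ℂ-vector space and let `𝔭'`
be the trace-free self-adjoint endomorphisms.  For `B₁, B₂ ∈ 𝔭'`, `[B₁,B₂] = 0` iff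
`B₁` and `B₂` are proportional: `B₁ = a • B`, `B₂ = b • B` for some `B ∈ 𝔭'`, `a b : ℂ`. -/
theorem stmt17
    (V : Type) [AddCommGroup V] [Module ℂ V] [FiniteDimensional ℂ V]
    (BV : LinearMap.BilinForm ℂ V)
    (hVnd : BV.Nondegenerate)
    (hVsymp : ∀ u v : V, BV u v = -BV v u)
    (hV4 : Module.finrank ℂ V = 4)
    (B₁ B₂ : Module.End ℂ V)
    (hB₁ : ∀ u v : V, BV (B₁ u) v = BV u (B₁ v))
    (hB₂ : ∀ u v : V, BV (B₂ u) v = BV u (B₂ v))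
    (htr₁ : LinearMap.trace ℂ V B₁ = 0) (htr₂ : LinearMap.trace ℂ V B₂ = 0) :
    B₁ * B₂ = B₂ * B₁ ↔
      ∃ (B : Module.End ℂ V) (a b : ℂ),
        (∀ u v : V, BV (B u) v = BV u (B v)) ∧ LinearMap.trace ℂ V B = 0 ∧
          B₁ = a • B ∧ B₂ = b • B := by
  refine ⟨fun hcomm => ?_, ?_⟩
  · have hω : BV.IsAlt := fun x => by linear_combination (hVsymp x x) / 2
    obtain ⟨b, hb⟩ := BV.exists_basis_toMatrix₂_eq_J₄ hω hVnd.1 hV4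
    let φ := LinearMap.toMatrixAlgEquiv b
    have hsa {B : Module.End ℂ V} (hB : LinearMap.IsAdjointPair BV BV B B) :
        (J₄ ℂ).IsSelfAdjoint (φ B) := by
      rwa [LinearMap.isAdjointPair_iff_toMatrix b, hb] at hB
    have htr {B : Module.End ℂ V} (hB : LinearMap.trace ℂ V B = 0) : (φ B).trace = 0 := by
      rwa [LinearMap.trace_eq_matrix_trace ℂ b] at hB
    rcases eq_smul_or_eq_zero_of_commute_of_isSelfAdjoint_J₄ (hsa hB₁) (hsa hB₂) (htr htr₁)
      (htr htr₂) (by rw [← map_mul, hcomm, map_mul]) with ⟨c, hc⟩ | h0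
    · exact ⟨B₁, 1, c, hB₁, htr₁, (one_smul _ _).symm, φ.injective (by rw [map_smul, hc])⟩
    · exact ⟨B₂, 0, 1, hB₂, htr₂, φ.injective (by rw [h0, zero_smul, map_zero]),
        (one_smul _ _).symm⟩
  · rintro ⟨B, a, b, -, -, rfl, rfl⟩
    rw [smul_mul_smul_comm, smul_mul_smul_comm, mul_comm a b]
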